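/- arXiv:2203.06017 — 3 statements merged into one kernel-verified Lean document; each statement's English description precedes it below -/
import Mathlib

section
/- Let $B$ be a ring, $r \geq 1$ and $d \in \mathbb{Z}$. With $s_j$ and $J_{d,r} \subseteq B[p_1,\dots,p_r]$, $J_{d,r-1} \subseteq B[p_1,\dots,p_{r-1}]$ defined as usual, there is an exact sequence of $B$-bimodules $$B[p_1,\dots,p_r]/J_{d-1,r} \xrightarrow{\;p_r\cdot\;} B[p_1,\dots,p_r]/J_{d,r} \xrightarrow{\;p_r \mapsto 0\;} B[p_1,\dots,p_{r-1}]/J_{d,r-1} \to 0,$$ where the first map is induced by multiplication by $p_r$ and the second by the algebra map sending $p_r$ to $0$: i.e., the second map is surjective and its kernel equals the image of the first map. -/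
open scoped Pointwise

noncomputable section

/-- The (possibly noncommutative) polynomial ring `B[p₁,…,p_r]` over a ring `B`,
with `r` central variables, realized as the monoid algebra of `Fin r →₀ ℕ`. -/
abbrev NCPoly (B : Type*) [Ring B] (r : ℕ) := AddMonoidAlgebra B (Fin r →₀ ℕ)

/-- The variable `p_{i+1}` of `B[p₁,…,p_r]`. -/
noncomputable def pvar (B : Type*) [Ring B] (r : ℕ) (i : Fin r) : NCPoly B r :=
  AddMonoidAlgebra.single (Finsupp.single i 1) (1 : B)

/-- The two-sided ideal `J_d` generated by the `s j` with `j ≥ d`. -/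
noncomputable def Jideal (B : Type*) [Ring B] (r : ℕ) (s : ℤ → NCPoly B r) (d : ℤ) :
    TwoSidedIdeal (NCPoly B r) :=
  TwoSidedIdeal.span {x | ∃ j : ℤ, d ≤ j ∧ x = s j}

/-!
Write `R = B[p₁,…,p_r]` and `c = p_r`, a central element. Multiplication by `c` sends `J_{d-1}`
into `J_d` because for `j ≥ d - 1` the recursion for `s_{j+r}` expresses `c s_j` through
`s_{j+1}, …, s_{j+r}`. The map `g` kills `c` and sends `s_j` to `s'_j` (the two recursions agree
modulo `c`), so it induces the second map; it is surjective because the inclusion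
`e : B[p₁,…,p_{r-1}] → R` is a section of it. Every `z` is `e (g z)` plus a multiple of `c`, so if
`g x ∈ J'_d` then `x` lies in the ideal generated by `c` and the `e (s'_j)`, `j ≥ d`; since
`e (s'_j) = e (g s_j) ≡ s_j` modulo `c`, that ideal is `J_d + cR`.
-/

namespace TwoSidedIdeal

variable {R S : Type*} [Ring R] [Ring S]

theorem mul_mem_of_mem_span {c : R} (hc : ∀ a, Commute c a) {T : Set R} {I : TwoSidedIdeal R}
    (hT : ∀ a ∈ T, c * a ∈ I) {x : R} (hx : x ∈ span T) : c * x ∈ I := by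
  induction hx using span_induction with
  | mem a ha => exact hT a ha
  | zero => simp [I.zero_mem]
  | add a b _ _ ha hb => simpa [mul_add] using I.add_mem ha hb
  | neg a _ ha => simpa using I.neg_mem ha
  | left_absorb a b _ hb =>
    rw [← mul_assoc, (hc a).eq, mul_assoc]
    exact I.mul_mem_left _ _ hb
  | right_absorb b a _ ha => rw [← mul_assoc]; exact I.mul_mem_right _ _ ha

theorem map_mem_of_mem_span (g : R →+* S) {T : Set R} {I : TwoSidedIdeal S}
    (hT : Set.MapsTo g T I) {x : R} (hx : x ∈ span T) : g x ∈ I :=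
  (mem_comap g).1 (span_le.2 (fun _ ht => (mem_comap g).2 (hT ht)) hx)

/-- The two-sided ideal `I + cR` of a central element `c`. -/
def addMulCentral (I : TwoSidedIdeal R) {c : R} (hc : ∀ a, Commute c a) : TwoSidedIdeal R :=
  mk' {x | ∃ y, x - c * y ∈ I}
    ⟨0, by simp [I.zero_mem]⟩
    (fun ⟨y, hy⟩ ⟨y', hy'⟩ =>
      ⟨y + y', by convert I.add_mem hy hy' using 1; noncomm_ring⟩)
    (fun ⟨y, hy⟩ => ⟨-y, by convert I.neg_mem hy using 1; noncomm_ring⟩)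
    (fun {a _} ⟨y, hy⟩ => ⟨a * y, by
      convert I.mul_mem_left a _ hy using 1; rw [mul_sub, ← mul_assoc, (hc a).eq, mul_assoc]⟩)
    (fun {_ b} ⟨y, hy⟩ => ⟨y * b, by convert I.mul_mem_right _ b hy using 1; noncomm_ring⟩)

theorem mem_addMulCentral {I : TwoSidedIdeal R} {c : R} {hc : ∀ a, Commute c a} {x : R} :
    x ∈ I.addMulCentral hc ↔ ∃ y, x - c * y ∈ I :=
  mem_mk' ..

theorem exists_sub_mul_mem_of_map_mem_span (g : R →+* S) (e : S →+* R) {c : R}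
    (hc : ∀ a, Commute c a) (hdecomp : ∀ z, ∃ y, z = e (g z) + c * y) {I : TwoSidedIdeal R}
    {T : Set S} (hT : T ⊆ g '' I) {x : R} (hx : g x ∈ span T) : ∃ y, x - c * y ∈ I := by
  have hspan : span T ≤ comap e (I.addMulCentral hc) := span_le.2 fun t ht => by
    obtain ⟨z, hz, rfl⟩ := hT ht
    obtain ⟨y, hy⟩ := hdecomp z
    refine (mem_comap e).2 (mem_addMulCentral.2 ⟨-y, ?_⟩)
    rwa [mul_neg, sub_neg_eq_add, ← hy]
  obtain ⟨y₁, hy₁⟩ := mem_addMulCentral.1 ((mem_comap e).1 (hspan hx))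
  obtain ⟨y₀, hy₀⟩ := hdecomp x
  refine ⟨y₀ + y₁, ?_⟩
  convert hy₁ using 1
  nth_rw 1 [hy₀]
  noncomm_ring

end TwoSidedIdeal

namespace NCPoly

open AddMonoidAlgebra

variable {B : Type*} [Ring B] {r m : ℕ}

theorem pvar_commute (i : Fin r) (a : NCPoly B r) : Commute (pvar B r i) a :=
  single_commute (fun _ => .all _ _) (fun _ => .one_left _) a

theorem pvar_pow (i : Fin r) (k : ℕ) :
    pvar B r i ^ k = single (Finsupp.single i k) (1 : B) := by
  rw [pvar, single_pow, one_pow, Finsupp.smul_single, smul_eq_mul, mul_one]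

theorem single_single_add (i : Fin r) (k : ℕ) (n : Fin r →₀ ℕ) (b : B) :
    (single (Finsupp.single i k + n) b : NCPoly B r) = pvar B r i ^ k * single n b := by
  rw [pvar_pow, single_mul_single, one_mul]

theorem ringHom_ext {S : Type*} [Semiring S] {f f' : NCPoly B r →+* S}
    (hC : ∀ b, f (single 0 b) = f' (single 0 b))
    (hvar : ∀ i, f (pvar B r i) = f' (pvar B r i)) : f = f' := by
  refine AddMonoidAlgebra.ringHom_ext hC fun n => ?_
  induction n using Finsupp.induction with
  | zero => exact hC 1
  | single_add i k n _ _ ih =>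
    rw [single_single_add, map_mul, map_mul, map_pow, map_pow, hvar, ih]

variable (B m) in
def castSuccHom : NCPoly B m →+* NCPoly B (m + 1) :=
  mapDomainRingHom B (Finsupp.mapDomain.addMonoidHom Fin.castSucc)

theorem castSuccHom_single (n : Fin m →₀ ℕ) (b : B) :
    castSuccHom B m (single n b) = single (Finsupp.mapDomain Fin.castSucc n) b := by
  simp [castSuccHom, mapDomainRingHom_apply, mapDomain_single]

theorem castSuccHom_pvar (i : Fin m) :
    castSuccHom B m (pvar B m i) = pvar B (m + 1) i.castSucc := by
  rw [pvar, castSuccHom_single, Finsupp.mapDomain_single, pvar]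

theorem exists_eq_castSuccHom_add_pvar_last_mul (z : NCPoly B (m + 1)) :
    ∃ w y, z = castSuccHom B m w + pvar B (m + 1) (Fin.last m) * y := by
  induction z using AddMonoidAlgebra.induction_linear with
  | zero => exact ⟨0, 0, by simp⟩
  | add z z' hz hz' =>
    obtain ⟨w, y, rfl⟩ := hz
    obtain ⟨w', y', rfl⟩ := hz'
    exact ⟨w + w', y + y', by rw [map_add, mul_add]; abel⟩
  | single n b =>
    induction n using Finsupp.induction with
    | zero => exact ⟨single 0 b, 0, by rw [castSuccHom_single, Finsupp.mapDomain_zero]; simp⟩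
    | single_add i k n _ hk ih =>
      rw [single_single_add]
      induction i using Fin.lastCases with
      | last =>
        obtain ⟨k, rfl⟩ := Nat.exists_eq_succ_of_ne_zero hk
        refine ⟨0, pvar B (m + 1) (Fin.last m) ^ k * single n b, ?_⟩
        rw [map_zero, zero_add, pow_succ', mul_assoc]
      | cast i =>
        obtain ⟨w, y, h⟩ := ih
        refine ⟨pvar B m i ^ k * w, pvar B (m + 1) i.castSucc ^ k * y, ?_⟩
        rw [h, mul_add, map_mul, map_pow, castSuccHom_pvar, ← mul_assoc, ← mul_assoc,
          ((pvar_commute _ (pvar B (m + 1) (Fin.last m))).pow_left k).eq]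

section Restriction

variable (g : NCPoly B (m + 1) →+* NCPoly B m)

theorem comp_castSuccHom (hgC : ∀ b : B, g (single 0 b) = single 0 b)
    (hgvar : ∀ i : Fin m, g (pvar B (m + 1) i.castSucc) = pvar B m i) :
    g.comp (castSuccHom B m) = RingHom.id _ :=
  ringHom_ext (fun b => by simp [castSuccHom_single, hgC])
    fun i => by simp [castSuccHom_pvar, hgvar]

theorem exists_eq_castSuccHom_map_add_pvar_last_mul
    (hgC : ∀ b : B, g (single 0 b) = single 0 b)
    (hgvar : ∀ i : Fin m, g (pvar B (m + 1) i.castSucc) = pvar B m i)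
    (hglast : g (pvar B (m + 1) (Fin.last m)) = 0) (z : NCPoly B (m + 1)) :
    ∃ y, z = castSuccHom B m (g z) + pvar B (m + 1) (Fin.last m) * y := by
  obtain ⟨w, y, rfl⟩ := exists_eq_castSuccHom_add_pvar_last_mul z
  refine ⟨y, ?_⟩
  rw [map_add, map_mul, hglast, zero_mul, add_zero, ← RingHom.comp_apply g,
    comp_castSuccHom g hgC hgvar, RingHom.id_apply]

theorem map_s_eq {s : ℤ → NCPoly B (m + 1)} {s' : ℤ → NCPoly B m} (hs0 : s 0 = 1)
    (hsneg : ∀ j : ℤ, j < 0 → s j = 0)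
    (hsrec : ∀ j : ℤ, 0 < j → s j = -∑ i : Fin (m + 1), pvar B (m + 1) i * s (j - ((i : ℕ) + 1)))
    (hs'0 : s' 0 = 1) (hs'neg : ∀ j : ℤ, j < 0 → s' j = 0)
    (hs'rec : ∀ j : ℤ, 0 < j → s' j = -∑ i : Fin m, pvar B m i * s' (j - ((i : ℕ) + 1)))
    (hgvar : ∀ i : Fin m, g (pvar B (m + 1) i.castSucc) = pvar B m i)
    (hglast : g (pvar B (m + 1) (Fin.last m)) = 0) (j : ℤ) :
    g (s j) = s' j := by
  suffices ∀ N : ℕ, ∀ j : ℤ, j < N → g (s j) = s' j from this (j.toNat + 1) j (by omega)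
  intro N
  induction N with
  | zero => intro j hj; rw [hsneg j (by omega), hs'neg j (by omega), map_zero]
  | succ N ih =>
    intro j hj
    rcases lt_trichotomy j 0 with hj0 | rfl | hj0
    · rw [hsneg j hj0, hs'neg j hj0, map_zero]
    · rw [hs0, hs'0, map_one]
    · rw [hsrec j hj0, hs'rec j hj0, map_neg, map_sum, Fin.sum_univ_castSucc, map_mul, hglast,
        zero_mul, add_zero]
      refine congrArg _ (Finset.sum_congr rfl fun i _ => ?_)
      rw [map_mul, hgvar, Fin.val_castSucc, ih _ (by omega)]

end Restriction

theorem s_mem_Jideal (s : ℤ → NCPoly B r) {d j : ℤ} (hj : d ≤ j) : s j ∈ Jideal B r s d :=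
  TwoSidedIdeal.subset_span ⟨j, hj, rfl⟩

theorem pvar_last_mul_mem_Jideal {s : ℤ → NCPoly B (m + 1)} (hsneg : ∀ j : ℤ, j < 0 → s j = 0)
    (hsrec : ∀ j : ℤ, 0 < j →
      s j = -∑ i : Fin (m + 1), pvar B (m + 1) i * s (j - ((i : ℕ) + 1)))
    {d j : ℤ} (hj : d - 1 ≤ j) : pvar B (m + 1) (Fin.last m) * s j ∈ Jideal B (m + 1) s d := by
  rcases lt_or_ge j 0 with hj0 | hj0
  · rw [hsneg j hj0, mul_zero]
    exact TwoSidedIdeal.zero_mem _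
  have hrec := hsrec (j + m + 1) (by omega)
  rw [Fin.sum_univ_castSucc, Fin.val_last, show j + m + 1 - ((m : ℕ) + 1 : ℤ) = j by ring] at hrec
  rw [show pvar B (m + 1) (Fin.last m) * s j = -s (j + m + 1) -
      ∑ i : Fin m, pvar B (m + 1) i.castSucc * s (j + m + 1 - ((i : ℕ) + 1)) by
    rw [hrec]; simp only [Fin.val_castSucc]; abel]
  refine TwoSidedIdeal.sub_mem _ (TwoSidedIdeal.neg_mem _ (s_mem_Jideal s (by omega)))
    (TwoSidedIdeal.finsetSum_mem _ _ _ fun i _ =>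
      TwoSidedIdeal.mul_mem_left _ _ _ (s_mem_Jideal s (by omega)))

end NCPoly

/-- Exactness of
`B[p₁,…,p_r]/J_{d-1,r} --(p_r⬝)--> B[p₁,…,p_r]/J_{d,r} --(p_r ↦ 0)--> B[p₁,…,p_{r-1}]/J_{d,r-1} → 0`,
stated elementwise: both maps are well defined, the second induced map is surjective, and its
kernel equals the image of the first. Here `g` is the `B`-algebra homomorphism with `p_r ↦ 0`,
`p_i ↦ p_i` for `i < r`. -/
theorem statement4 (B : Type*) [Ring B] (r : ℕ) (hr : 1 ≤ r)
    (s : ℤ → NCPoly B r) (hs0 : s 0 = 1) (hsneg : ∀ j : ℤ, j < 0 → s j = 0)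
    (hsrec : ∀ j : ℤ, 0 < j → s j = -∑ i : Fin r, pvar B r i * s (j - ((i : ℕ) + 1)))
    (s' : ℤ → NCPoly B (r - 1)) (hs'0 : s' 0 = 1) (hs'neg : ∀ j : ℤ, j < 0 → s' j = 0)
    (hs'rec : ∀ j : ℤ, 0 < j →
      s' j = -∑ i : Fin (r - 1), pvar B (r - 1) i * s' (j - ((i : ℕ) + 1)))
    (g : NCPoly B r →+* NCPoly B (r - 1))
    (hgC : ∀ b : B, g (AddMonoidAlgebra.single 0 b) = AddMonoidAlgebra.single 0 b)
    (hgvar : ∀ (i : Fin r) (h : (i : ℕ) < r - 1), g (pvar B r i) = pvar B (r - 1) ⟨i, h⟩)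
    (hglast : g (pvar B r ⟨r - 1, by omega⟩) = 0)
    (d : ℤ) :
    (∀ x ∈ Jideal B r s (d - 1), pvar B r ⟨r - 1, by omega⟩ * x ∈ Jideal B r s d) ∧
    (∀ x ∈ Jideal B r s d, g x ∈ Jideal B (r - 1) s' d) ∧
    (∀ y : NCPoly B (r - 1), ∃ x : NCPoly B r, g x - y ∈ Jideal B (r - 1) s' d) ∧
    (∀ x : NCPoly B r, g x ∈ Jideal B (r - 1) s' d ↔
      ∃ y : NCPoly B r, x - pvar B r ⟨r - 1, by omega⟩ * y ∈ Jideal B r s d) := by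
  obtain ⟨m, rfl⟩ : ∃ m, r = m + 1 := ⟨r - 1, by omega⟩
  have hgvar' : ∀ i : Fin m, g (pvar B (m + 1) i.castSucc) = pvar B m i :=
    fun i => hgvar i.castSucc i.isLt
  have hglast' : g (pvar B (m + 1) (Fin.last m)) = 0 := hglast
  have hgs : ∀ j, g (s j) = s' j :=
    NCPoly.map_s_eq g hs0 hsneg hsrec hs'0 hs'neg hs'rec hgvar' hglast'
  have hmapJ : ∀ x ∈ Jideal B (m + 1) s d, g x ∈ Jideal B m s' d := by
    refine fun x => TwoSidedIdeal.map_mem_of_mem_span g ?_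
    rintro _ ⟨j, hj, rfl⟩
    exact (hgs j).symm ▸ NCPoly.s_mem_Jideal s' hj
  refine ⟨fun x => TwoSidedIdeal.mul_mem_of_mem_span (NCPoly.pvar_commute _) ?_, hmapJ,
    fun y => ⟨NCPoly.castSuccHom B m y, ?_⟩, fun x => ⟨fun hx => ?_, fun ⟨y, hy⟩ => ?_⟩⟩
  · rintro _ ⟨j, hj, rfl⟩
    exact NCPoly.pvar_last_mul_mem_Jideal hsneg hsrec (by omega)
  · rw [← RingHom.comp_apply g, NCPoly.comp_castSuccHom g hgC hgvar', RingHom.id_apply,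
      sub_self]
    exact TwoSidedIdeal.zero_mem _
  · refine TwoSidedIdeal.exists_sub_mul_mem_of_map_mem_span g (NCPoly.castSuccHom B m)
      (NCPoly.pvar_commute _)
      (NCPoly.exists_eq_castSuccHom_map_add_pvar_last_mul g hgC hgvar' hglast') ?_ hx
    rintro _ ⟨j, hj, rfl⟩
    exact ⟨s j, NCPoly.s_mem_Jideal s hj, hgs j⟩
  · have hgx := hmapJ _ hy
    rwa [map_sub, map_mul, hglast, zero_mul, sub_zero] at hgx
end
end

section
/- Let $B$ be a ring and $r \in \mathbb{N}$, with $L, J_d \subseteq B[p_1,\dots,p_r]$ as usual ($L$ generated by $p_1,\dots,p_r$; $J_d$ generated by $s_j$ for $j \geq d$, where $s_0=1$, $s_j=0$ for $j<0$, $s_j=-\sum_{i=1}^r p_i s_{j-i}$ for $j>0$). Then for each $d \in \mathbb{Z}$ there exists $s \in \mathbb{N}$ such that $L^s \cdot J_d \subseteq J_{d+1}$. -/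
open scoped Pointwise

noncomputable section

/-- The two-sided ideal `L` generated by the variables `p₁,…,p_r`. -/
noncomputable def Lideal (B : Type*) [Ring B] (r : ℕ) : TwoSidedIdeal (NCPoly B r) :=
  TwoSidedIdeal.span (Set.range (pvar B r))

/-- Product of two two-sided ideals: the two-sided ideal generated by products. -/
noncomputable def imul {R : Type*} [Ring R] (I J : TwoSidedIdeal R) : TwoSidedIdeal R :=
  TwoSidedIdeal.span ((I : Set R) * (J : Set R))

/-- Powers of a two-sided ideal (`I ^ 0` is the unit ideal). -/
noncomputable def ipow {R : Type*} [Ring R] (I : TwoSidedIdeal R) : ℕ → TwoSidedIdeal R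
  | 0 => ⊤
  | n + 1 => imul (ipow I n) I

/-!
The `p_i` and, by the recurrence, all the `s j` lie in the centre `Z` of `B[p₁,…,p_r]`, a
commutative ring in which `∑ s j t^j` is the inverse of `F = 1 + p₁ t + ⋯ + p_r t^r`. Modulo the
ideal `J` of `Z` generated by the `s j` with `j ≥ d + 1` this inverse is a polynomial, so `F` is a
unit of `(Z ⧸ J)[t]` and its higher coefficients `p_i` are nilpotent modulo `J`. As `L` is finitely
generated, `L^m ⊆ J_{d+1}` for some `m`, and a fortiori `L^m ⬝ J_d ⊆ J_{d+1}`.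
-/

/-- `s j` is the coefficient of `t ^ j` in `(1 + x₀ t + x₁ t² + ⋯ + x_{r-1} t^r)⁻¹`, extended by
zero to negative `j`. -/
structure IsReciprocalSeq {R : Type*} [Ring R] {r : ℕ} (x : Fin r → R) (s : ℤ → R) : Prop where
  apply_zero : s 0 = 1
  apply_of_neg : ∀ j : ℤ, j < 0 → s j = 0
  apply_of_pos : ∀ j : ℤ, 0 < j → s j = -∑ i : Fin r, x i * s (j - ((i : ℕ) + 1))

namespace IsReciprocalSeq

variable {R : Type*} [Ring R] {r : ℕ} {x : Fin r → R} {s : ℤ → R}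

theorem of_comp {S : Type*} [Ring S] {f : R →+* S} (hf : Function.Injective f)
    (h : IsReciprocalSeq (f ∘ x) (f ∘ s)) : IsReciprocalSeq x s where
  apply_zero := hf <| by simpa using h.apply_zero
  apply_of_neg j hj := hf <| by simpa using h.apply_of_neg j hj
  apply_of_pos j hj := hf <| by simpa using h.apply_of_pos j hj

theorem mem_center (h : IsReciprocalSeq x s) (hx : ∀ i, x i ∈ Subring.center R) (j : ℤ) :
    s j ∈ Subring.center R := by
  rcases lt_trichotomy j 0 with hj | rfl | hj
  · rw [h.apply_of_neg j hj]; exact zero_mem _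
  · rw [h.apply_zero]; exact one_mem _
  · rw [h.apply_of_pos j hj]
    exact neg_mem (sum_mem fun i _ ↦ mul_mem (hx i) (h.mem_center hx _))
termination_by j.toNat
decreasing_by omega

end IsReciprocalSeq

section Commutative

open Polynomial

variable {A : Type*} [CommRing A] {r : ℕ}

noncomputable def recurrencePoly (x : Fin r → A) : A[X] :=
  1 + ∑ i : Fin r, C (x i) * X ^ ((i : ℕ) + 1)

theorem coeff_recurrencePoly_succ (x : Fin r → A) (i : Fin r) :
    (recurrencePoly x).coeff ((i : ℕ) + 1) = x i := by
  simp [recurrencePoly, coeff_X_pow, coeff_one, Fin.val_inj]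

theorem IsReciprocalSeq.coe_recurrencePoly_mul {x : Fin r → A} {s : ℤ → A}
    (h : IsReciprocalSeq x s) :
    (recurrencePoly x : PowerSeries A) * PowerSeries.mk (fun n ↦ s n) = 1 := by
  have hshift (k n : ℕ) : PowerSeries.coeff n (PowerSeries.X ^ k * PowerSeries.mk fun n ↦ s n) =
      s (n - k) := by
    rw [PowerSeries.coeff_X_pow_mul']
    split_ifs with hk
    · rw [PowerSeries.coeff_mk]; congr 1; omega
    · rw [h.apply_of_neg _ (by omega)]
  have hcoe : (recurrencePoly x : PowerSeries A) =
      1 + ∑ i : Fin r, PowerSeries.C (x i) * PowerSeries.X ^ ((i : ℕ) + 1) := by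
    rw [recurrencePoly, ← coeToPowerSeries.ringHom_apply, map_add, map_sum]
    simp [coeToPowerSeries.ringHom_apply]
  ext n
  simp only [hcoe, add_mul, one_mul, Finset.sum_mul, mul_assoc, map_add, map_sum,
    PowerSeries.coeff_C_mul, hshift, PowerSeries.coeff_mk, PowerSeries.coeff_one]
  split_ifs with hn
  · subst hn
    rw [Nat.cast_zero, h.apply_zero, add_eq_left]
    exact Finset.sum_eq_zero fun i _ ↦ by rw [h.apply_of_neg _ (by omega), mul_zero]
  · rw [h.apply_of_pos n (by omega)]
    push_cast
    exact neg_add_cancel _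

theorem IsReciprocalSeq.exists_pow_span_le {x : Fin r → A} {s : ℤ → A}
    (h : IsReciprocalSeq x s) (d : ℤ) :
    ∃ m : ℕ, Ideal.span (Set.range x) ^ m ≤ Ideal.span {y | ∃ j, d ≤ j ∧ y = s j} := by
  set J := Ideal.span {y | ∃ j, d ≤ j ∧ y = s j}
  set π := Ideal.Quotient.mk J
  set S := PowerSeries.map π (PowerSeries.mk fun n ↦ s n)
  have hS : (PowerSeries.trunc d.toNat S : PowerSeries (A ⧸ J)) = S := by
    ext n
    rw [coeff_coe, PowerSeries.coeff_trunc]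
    split_ifs with hn
    · rfl
    · rw [PowerSeries.coeff_map, PowerSeries.coeff_mk, eq_comm, Ideal.Quotient.eq_zero_iff_mem]
      exact Ideal.subset_span ⟨n, by omega, rfl⟩
  have hunit : IsUnit ((recurrencePoly x).map π) := by
    refine .of_mul_eq_one (PowerSeries.trunc d.toNat S) (coe_inj.1 ?_)
    rw [coe_mul, hS, polynomial_map_coe, ← map_mul, h.coe_recurrencePoly_mul, map_one, coe_one]
  have hrad : Ideal.span (Set.range x) ≤ J.radical := by
    rw [Ideal.span_le]
    rintro _ ⟨i, rfl⟩
    obtain ⟨k, hk⟩ := (isUnit_iff_coeff_isUnit_isNilpotent.1 hunit).2 ((i : ℕ) + 1) (by omega)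
    rw [coeff_map, coeff_recurrencePoly_succ, ← map_pow, Ideal.Quotient.eq_zero_iff_mem] at hk
    exact ⟨k, hk⟩
  exact Ideal.exists_pow_le_of_le_radical_of_fg hrad (Submodule.fg_span (Set.finite_range x))

end Commutative

section CentralImage

variable {A R : Type*} [CommRing A] [Ring R]

theorem span_image_ideal_span (φ : A →+* R) (S : Set A) :
    TwoSidedIdeal.span (φ '' Ideal.span S) = TwoSidedIdeal.span (φ '' S) := by
  refine le_antisymm (TwoSidedIdeal.span_le.2 ?_)
    (TwoSidedIdeal.span_mono (Set.image_mono Ideal.subset_span))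
  rintro _ ⟨a, ha, rfl⟩
  induction ha using Submodule.span_induction with
  | mem a ha => exact TwoSidedIdeal.subset_span ⟨a, ha, rfl⟩
  | zero => rw [map_zero]; exact zero_mem _
  | add a b _ _ ha hb => rw [map_add]; exact add_mem ha hb
  | smul c a _ ha => rw [smul_eq_mul, map_mul]; exact TwoSidedIdeal.mul_mem_left _ _ _ ha

theorem mul_mem_span_image_mul {φ : A →+* R} (hφ : ∀ a y, φ a * y = y * φ a) {I K : Ideal A} {y z : R}
    (hy : y ∈ TwoSidedIdeal.span (φ '' I)) (hz : z ∈ TwoSidedIdeal.span (φ '' K)) :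
    y * z ∈ TwoSidedIdeal.span (φ '' ↑(I * K)) := by
  induction hy using TwoSidedIdeal.span_induction generalizing z with
  | mem _ hy =>
    obtain ⟨a, ha, rfl⟩ := hy
    induction hz using TwoSidedIdeal.span_induction with
    | mem _ hz =>
      obtain ⟨b, hb, rfl⟩ := hz
      exact TwoSidedIdeal.subset_span ⟨a * b, Ideal.mul_mem_mul ha hb, map_mul φ a b⟩
    | zero => rw [mul_zero]; exact zero_mem _
    | add _ _ _ _ h₁ h₂ => rw [mul_add]; exact add_mem h₁ h₂
    | neg _ _ h => rw [mul_neg]; exact neg_mem h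
    | left_absorb c _ _ h =>
      rw [← mul_assoc, hφ a c, mul_assoc]; exact TwoSidedIdeal.mul_mem_left _ c _ h
    | right_absorb c _ _ h => rw [← mul_assoc]; exact TwoSidedIdeal.mul_mem_right _ _ c h
  | zero => rw [zero_mul]; exact zero_mem _
  | add _ _ _ _ h₁ h₂ => rw [add_mul]; exact add_mem (h₁ hz) (h₂ hz)
  | neg _ _ h => rw [neg_mul]; exact neg_mem (h hz)
  | left_absorb c _ _ h => rw [mul_assoc]; exact TwoSidedIdeal.mul_mem_left _ c _ (h hz)
  | right_absorb c _ _ h => rw [mul_assoc]; exact h (TwoSidedIdeal.mul_mem_left _ c _ hz)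

theorem ipow_span_image_le {φ : A →+* R} (hφ : ∀ a y, φ a * y = y * φ a) (I : Ideal A) (m : ℕ) :
    ipow (TwoSidedIdeal.span (φ '' I)) m ≤ TwoSidedIdeal.span (φ '' ↑(I ^ m)) := by
  induction m with
  | zero =>
    have h1 : (1 : R) ∈ TwoSidedIdeal.span (φ '' ↑(I ^ 0)) :=
      TwoSidedIdeal.subset_span ⟨1, by simp, map_one φ⟩
    exact fun y _ ↦ mul_one y ▸ TwoSidedIdeal.mul_mem_left _ y 1 h1
  | succ m ih =>
    refine TwoSidedIdeal.span_le.2 ?_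
    rintro _ ⟨y, hy, z, hz, rfl⟩
    rw [pow_succ]
    exact mul_mem_span_image_mul hφ (ih hy) hz

end CentralImage

theorem imul_le_left {R : Type*} [Ring R] (I K : TwoSidedIdeal R) : imul I K ≤ I :=
  TwoSidedIdeal.span_le.2 fun _ ⟨y, hy, z, _, hyz⟩ ↦ hyz ▸ I.mul_mem_right y z hy

theorem pvar_mem_center (B : Type*) [Ring B] (r : ℕ) (i : Fin r) :
    pvar B r i ∈ Subring.center (NCPoly B r) :=
  Subring.mem_center_iff.2 fun y ↦
    (AddMonoidAlgebra.single_commute (fun _ ↦ .all _ _) (fun _ ↦ .one_left _) y).eq.symm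

/-- For each `d` there exists `m` such that `L^m ⬝ J_d ⊆ J_{d+1}`. -/
theorem statement6 (B : Type*) [Ring B] (r : ℕ)
    (s : ℤ → NCPoly B r) (hs0 : s 0 = 1) (hsneg : ∀ j : ℤ, j < 0 → s j = 0)
    (hsrec : ∀ j : ℤ, 0 < j → s j = -∑ i : Fin r, pvar B r i * s (j - ((i : ℕ) + 1)))
    (d : ℤ) :
    ∃ m : ℕ, imul (ipow (Lideal B r) m) (Jideal B r s d) ≤ Jideal B r s (d + 1) := by
  have hs : IsReciprocalSeq (pvar B r) s := ⟨hs0, hsneg, hsrec⟩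
  set Z := Subring.center (NCPoly B r)
  let p : Fin r → Z := fun i ↦ ⟨pvar B r i, pvar_mem_center B r i⟩
  let s' : ℤ → Z := fun j ↦ ⟨s j, hs.mem_center (pvar_mem_center B r) j⟩
  have hs' : IsReciprocalSeq p s' :=
    IsReciprocalSeq.of_comp (f := Z.subtype) Subtype.val_injective hs
  have hZ : ∀ (a : Z) y, Z.subtype a * y = y * Z.subtype a :=
    fun a y ↦ (Subring.mem_center_iff.1 a.2 y).symm
  obtain ⟨m, hm⟩ := hs'.exists_pow_span_le (d + 1)
  refine ⟨m, (imul_le_left _ _).trans ?_⟩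
  calc ipow (Lideal B r) m
      = ipow (TwoSidedIdeal.span (Z.subtype '' Ideal.span (Set.range p))) m := by
        rw [span_image_ideal_span, ← Set.range_comp]; rfl
    _ ≤ TwoSidedIdeal.span (Z.subtype '' ↑(Ideal.span (Set.range p) ^ m)) :=
        ipow_span_image_le hZ _ m
    _ ≤ TwoSidedIdeal.span (Z.subtype '' Ideal.span {y | ∃ j, d + 1 ≤ j ∧ y = s' j}) :=
        TwoSidedIdeal.span_mono (Set.image_mono hm)
    _ = Jideal B r s (d + 1) := by
        rw [span_image_ideal_span, Jideal]
        congr 1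
        ext x
        constructor
        · rintro ⟨_, ⟨j, hj, rfl⟩, rfl⟩
          exact ⟨j, hj, rfl⟩
        · rintro ⟨j, hj, rfl⟩
          exact ⟨s' j, ⟨j, hj, rfl⟩, rfl⟩
end
end

section
/- Let $B$ be a ring, $r \geq 1$, and for $i \geq 1$ let $L_i \subseteq B[p_1,\dots,p_r]$ denote the two-sided ideal generated by the variables $p_j$ with $i \leq j \leq r$ (so $L_i = 0$ for $i > r$). With $s_j$ and $J_d$ defined as usual, for every $d \geq 0$ and every $1 \leq i \leq r$ one has $L_i \cdot J_d \subseteq J_{d+1} + L_{i+1}\cdot J_{d+i-r}$. -/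
open scoped Pointwise

noncomputable section

/-- The two-sided ideal `L_i` generated by the variables `p_j` with `i ≤ j ≤ r`
(variables numbered `1,…,r`; it is zero for `i > r`). -/
noncomputable def Lpartial (B : Type*) [Ring B] (r : ℕ) (i : ℕ) : TwoSidedIdeal (NCPoly B r) :=
  TwoSidedIdeal.span {x | ∃ j : Fin r, i ≤ (j : ℕ) + 1 ∧ x = pvar B r j}

/-! The generator `p_m` with `i ≤ m` times a generator `s_j` with `j ≥ d` is rewritten by the
recursion for `s_{j+m}`: `p_m s_j = -s_{j+m} - ∑_{k ≠ m} p_k s_{j+m-k}`. The terms with `k < m`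
lie in `J_{d+1}`, those with `k > m` in `L_{i+1} ⬝ J_{d+i-r}`. Since the variables are central,
checking the inclusion on products of generators suffices. -/

section CentralGenerators

variable {R : Type*} [Ring R] {S T : Set R} {K : TwoSidedIdeal R}

lemma mul_mem_of_mem_span_right {a : R} (ha : ∀ x, Commute a x)
    (h : ∀ b ∈ T, a * b ∈ K) {y : R} (hy : y ∈ TwoSidedIdeal.span T) : a * y ∈ K := by
  induction hy using TwoSidedIdeal.span_induction with
  | mem b hb => exact h b hb
  | zero => simp
  | add x y _ _ hx hy => simpa [mul_add] using K.add_mem hx hy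
  | neg x _ hx => simpa using K.neg_mem hx
  | left_absorb c x _ hx => simpa [← mul_assoc, (ha c).eq] using K.mul_mem_left c _ hx
  | right_absorb c x _ hx => simpa [mul_assoc] using K.mul_mem_right _ c hx

lemma imul_span_le_of_commute (hS : ∀ a ∈ S, ∀ x, Commute a x)
    (h : ∀ a ∈ S, ∀ b ∈ T, a * b ∈ K) :
    imul (TwoSidedIdeal.span S) (TwoSidedIdeal.span T) ≤ K := by
  refine TwoSidedIdeal.span_le.2 ?_
  rintro _ ⟨x, hx, y, hy, rfl⟩
  induction hx using TwoSidedIdeal.span_induction generalizing y with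
  | mem a ha => exact mul_mem_of_mem_span_right (hS a ha) (h a ha) hy
  | zero => simp
  | add x z _ _ hx hz => simpa [add_mul] using K.add_mem (hx y hy) (hz y hy)
  | neg x _ hx => simpa using K.neg_mem (hx y hy)
  | left_absorb c x _ hx => simpa [mul_assoc] using K.mul_mem_left c _ (hx y hy)
  | right_absorb c x _ hx =>
    simpa [mul_assoc] using hx (c * y) (TwoSidedIdeal.mul_mem_left _ c y hy)

end CentralGenerators

lemma pvar_commute (B : Type*) [Ring B] (r : ℕ) (m : Fin r) (x : NCPoly B r) :
    Commute (pvar B r m) x := by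
  induction x using AddMonoidAlgebra.induction with
  | zero => exact Commute.zero_right _
  | single_add a b f _ _ ih =>
    refine Commute.add_right ?_ ih
    simp only [Commute, SemiconjBy, pvar, AddMonoidAlgebra.single_mul_single, add_comm,
      one_mul, mul_one]

lemma pvar_mul_eq_of_rec (B : Type*) [Ring B] (r : ℕ) (s : ℤ → NCPoly B r)
    (hsrec : ∀ j : ℤ, 0 < j → s j = -∑ i : Fin r, pvar B r i * s (j - ((i : ℕ) + 1)))
    (m : Fin r) (j : ℤ) (hj : 0 < j + ((m : ℕ) + 1)) :
    pvar B r m * s j = -s (j + ((m : ℕ) + 1)) -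
      ∑ k ∈ Finset.univ.erase m, pvar B r k * s (j + ((m : ℕ) + 1) - ((k : ℕ) + 1)) := by
  rw [hsrec _ hj, neg_neg, ← Finset.add_sum_erase _ _ (Finset.mem_univ m),
    add_sub_cancel_right, add_sub_cancel_right]

theorem statement13_general (B : Type*) [Ring B] (r : ℕ)
    (s : ℤ → NCPoly B r)
    (hsrec : ∀ j : ℤ, 0 < j → s j = -∑ i : Fin r, pvar B r i * s (j - ((i : ℕ) + 1)))
    (d : ℤ) (hd : 0 ≤ d) (i : ℕ) :
    imul (Lpartial B r i) (Jideal B r s d) ≤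
      Jideal B r s (d + 1) ⊔ imul (Lpartial B r (i + 1)) (Jideal B r s (d + i - r)) := by
  set K := Jideal B r s (d + 1) ⊔ imul (Lpartial B r (i + 1)) (Jideal B r s (d + i - r))
  have hJ : ∀ j, d + 1 ≤ j → s j ∈ K := fun j hj =>
    le_sup_left (b := imul (Lpartial B r (i + 1)) _) (TwoSidedIdeal.subset_span ⟨j, hj, rfl⟩)
  refine imul_span_le_of_commute (by rintro _ ⟨m, -, rfl⟩; exact pvar_commute B r m) ?_
  rintro _ ⟨m, hm, rfl⟩ _ ⟨j, hj, rfl⟩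
  rw [pvar_mul_eq_of_rec B r s hsrec m j (by omega)]
  refine K.sub_mem (K.neg_mem (hJ _ (by omega))) (K.finsetSum_mem _ _ fun k hk => ?_)
  have hkm : (k : ℕ) ≠ m := Fin.val_ne_of_ne (Finset.ne_of_mem_erase hk)
  rcases hkm.lt_or_gt with hlt | hgt
  · exact K.mul_mem_left _ _ (hJ _ (by omega))
  · have hkr : (k : ℕ) + 1 ≤ r := k.isLt
    refine le_sup_right (a := Jideal B r s (d + 1))
      (TwoSidedIdeal.subset_span (Set.mul_mem_mul ?_ ?_))
    · exact TwoSidedIdeal.subset_span ⟨k, by omega, rfl⟩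
    · exact TwoSidedIdeal.subset_span ⟨_, by omega, rfl⟩

/-- For every `d ≥ 0` and `1 ≤ i ≤ r`, `L_i ⬝ J_d ⊆ J_{d+1} + L_{i+1} ⬝ J_{d+i-r}`. -/
theorem statement13 (B : Type*) [Ring B] (r : ℕ) (hr : 1 ≤ r)
    (s : ℤ → NCPoly B r) (hs0 : s 0 = 1) (hsneg : ∀ j : ℤ, j < 0 → s j = 0)
    (hsrec : ∀ j : ℤ, 0 < j → s j = -∑ i : Fin r, pvar B r i * s (j - ((i : ℕ) + 1)))
    (d : ℤ) (hd : 0 ≤ d) (i : ℕ) (hi1 : 1 ≤ i) (hir : i ≤ r) :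
    imul (Lpartial B r i) (Jideal B r s d) ≤
      Jideal B r s (d + 1) ⊔ imul (Lpartial B r (i + 1)) (Jideal B r s (d + i - r)) :=
  statement13_general B r s hsrec d hd i
end
end
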